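/- arXiv:2504.17063 — 2 statements merged into one kernel-verified Lean document; each statement's English description precedes it below -/
import Mathlib

section
/- Let U ⊆ ℝ^{n_pot} be open, M ∈ ℝ^{n_kin×n_kin} symmetric, V : U → ℝ continuously differentiable, c : U → ℝ^k continuously differentiable, and let Z : U → ℝ^{n_pot×n_kin}, A : U → ℝ^{ℓ×n_kin}, B : U → ℝ^{n_kin×m}, τ_d : U × ℝ^{n_kin} → ℝ^{n_kin}, G : ℝ^{n_kin} → ℝ^{n_kin×n_kin} be functions with G(Γ) skew-symmetric for every Γ. Let I ⊆ ℝ be an open interval and let ζ : I → U, ϖ : I → ℝ^{n_kin} be differentiable and λ : I → ℝ^k, μ : I → ℝ^ℓ, τ_ext : I → ℝ^m, ϖ_ext : I → ℝ^m be functions such that for all t ∈ I: ζ̇(t) = Z(ζ(t)) ϖ(t); M ϖ̇(t) = −Z(ζ(t))ᵀ ∇V(ζ(t)) − Z(ζ(t))ᵀ c'(ζ(t))ᵀ λ(t) − τ_d(ζ(t),ϖ(t)) − G(M ϖ(t)) ϖ(t) − A(ζ(t))ᵀ μ(t) − B(ζ(t)) τ_ext(t); c(ζ(t)) = 0; A(ζ(t))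 ϖ(t) = 0; and ϖ_ext(t) = B(ζ(t))ᵀ ϖ(t). Then for all t ∈ I the function H(t) := ½ ϖ(t)ᵀ M ϖ(t) + V(ζ(t)) is differentiable with Ḣ(t) = −ϖ(t)ᵀ τ_d(ζ(t),ϖ(t)) − ϖ_ext(t)ᵀ τ_ext(t). -/
/-!
Differentiating `H` along a solution gives `ϖᵀ M ϖ̇ + ∇V(ζ)ᵀ Z(ζ) ϖ`, using the symmetry of `M`.
Substituting the equation of motion, the potential force cancels the second term; the
constraint forces do no work, because `A(ζ) ϖ = 0` and, differentiating `c(ζ) = 0`,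
`c'(ζ) Z(ζ) ϖ = 0`; and the gyroscopic force does no work since `G(Mϖ)` is skew-symmetric.
-/

open Matrix

/-- The gradient of `V : ℝ^n → ℝ`, given componentwise by the partial derivatives. -/
noncomputable def grad {n : ℕ} (V : (Fin n → ℝ) → ℝ) (x : Fin n → ℝ) : Fin n → ℝ :=
  fun i => fderiv ℝ V x (Pi.single i 1)

/-- The Jacobian matrix of `c : ℝ^n → ℝ^k`. -/
noncomputable def jac {n k : ℕ} (c : (Fin n → ℝ) → (Fin k → ℝ)) (x : Fin n → ℝ) :
    Matrix (Fin k) (Fin n) ℝ :=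
  Matrix.of fun j i => fderiv ℝ c x (Pi.single i 1) j

open Filter Topology

section DotProduct

variable {R ι : Type*} [Fintype ι]

theorem dotProduct_mulVec_comm_of_transpose_eq [CommSemiring R] {M : Matrix ι ι R}
    (hM : Mᵀ = M) (v w : ι → R) : v ⬝ᵥ M *ᵥ w = w ⬝ᵥ M *ᵥ v := by
  conv_lhs => rw [← hM]
  exact dotProduct_transpose_mulVec M v w

theorem dotProduct_mulVec_self_eq_zero_of_transpose_eq_neg [CommRing R] [NoZeroDivisors R]
    [CharZero R] {G : Matrix ι ι R} (hG : Gᵀ = -G) (v : ι → R) : v ⬝ᵥ G *ᵥ v = 0 := by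
  have h := dotProduct_transpose_mulVec G v v
  rw [hG, neg_mulVec, dotProduct_neg] at h
  exact CharZero.neg_eq_self_iff.mp h

end DotProduct

section Derivatives

variable {𝕜 ι κ : Type*} [NontriviallyNormedField 𝕜] [Fintype ι] {u v : 𝕜 → ι → 𝕜}
  {u' v' : ι → 𝕜} {t : 𝕜}

theorem HasDerivAt.dotProduct (hu : HasDerivAt u u' t) (hv : HasDerivAt v v' t) :
    HasDerivAt (fun s => u s ⬝ᵥ v s) (u' ⬝ᵥ v t + u t ⬝ᵥ v') t := by
  have h i : HasDerivAt (fun s => u s i * v s i) (u' i * v t i + u t i * v' i) t :=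
    (hasDerivAt_pi.mp hu i).mul (hasDerivAt_pi.mp hv i)
  have hsum := HasDerivAt.fun_sum (u := Finset.univ) fun i _ => h i
  rw [Finset.sum_add_distrib] at hsum
  exact hsum

theorem HasDerivAt.const_mulVec (M : Matrix κ ι 𝕜) (hv : HasDerivAt v v' t) :
    HasDerivAt (fun s => M *ᵥ v s) (M *ᵥ v') t :=
  hasDerivAt_pi.mpr fun i => by
    have h := (hasDerivAt_const t (M i)).dotProduct hv
    rw [zero_dotProduct, zero_add] at h
    exact h

theorem HasDerivAt.dotProduct_mulVec_self {M : Matrix ι ι 𝕜} (hM : Mᵀ = M)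
    (hv : HasDerivAt v v' t) :
    HasDerivAt (fun s => v s ⬝ᵥ M *ᵥ v s) (2 * (v t ⬝ᵥ M *ᵥ v')) t := by
  convert hv.dotProduct (hv.const_mulVec M) using 1
  rw [dotProduct_mulVec_comm_of_transpose_eq hM v' (v t)]
  ring

end Derivatives

theorem fderiv_apply_eq_grad_dotProduct {n : ℕ} (V : (Fin n → ℝ) → ℝ) (x v : Fin n → ℝ) :
    fderiv ℝ V x v = grad V x ⬝ᵥ v := by
  conv_lhs => rw [pi_eq_sum_univ' v]
  simp [grad, dotProduct, mul_comm]

theorem fderiv_apply_eq_jac_mulVec {n k : ℕ} (c : (Fin n → ℝ) → (Fin k → ℝ))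
    (x v : Fin n → ℝ) : fderiv ℝ c x v = jac c x *ᵥ v := by
  conv_lhs => rw [pi_eq_sum_univ' v]
  funext j
  simp [jac, mulVec, dotProduct, Finset.sum_apply, mul_comm]

theorem dotProduct_mulVec_eq_of_forceBalance {R n p k l m : Type*} [CommRing R]
    [NoZeroDivisors R] [CharZero R] [Fintype n] [Fintype p] [Fintype k] [Fintype l] [Fintype m]
    {M G : Matrix n n R} {Z : Matrix p n R} {J : Matrix k p R} {A : Matrix l n R}
    {B : Matrix n m R} {w a d : n → R} {g : p → R} {lam : k → R} {mu : l → R} {τ : m → R}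
    (hG : Gᵀ = -G) (hJ : J *ᵥ (Z *ᵥ w) = 0) (hA : A *ᵥ w = 0)
    (hforce : M *ᵥ a = -(Zᵀ *ᵥ g) - Zᵀ *ᵥ (Jᵀ *ᵥ lam) - d - G *ᵥ w - Aᵀ *ᵥ mu - B *ᵥ τ) :
    w ⬝ᵥ M *ᵥ a = -(g ⬝ᵥ Z *ᵥ w) - w ⬝ᵥ d - (Bᵀ *ᵥ w) ⬝ᵥ τ := by
  rw [hforce]
  simp only [dotProduct_sub, dotProduct_neg, dotProduct_transpose_mulVec]
  rw [dotProduct_comm (Jᵀ *ᵥ lam), dotProduct_transpose_mulVec, hJ, hA, dotProduct_zero,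
    dotProduct_zero, dotProduct_mulVec_self_eq_zero_of_transpose_eq_neg hG, mulVec_transpose,
    dotProduct_mulVec w B]
  ring

theorem energy_balance_redundant_general {npot nkin k ℓ m : ℕ}
    (U : Set (Fin npot → ℝ)) (hU : IsOpen U)
    (M : Matrix (Fin nkin) (Fin nkin) ℝ) (hM : Mᵀ = M)
    (V : (Fin npot → ℝ) → ℝ) (hV : ContDiffOn ℝ 1 V U)
    (c : (Fin npot → ℝ) → (Fin k → ℝ)) (hc : ContDiffOn ℝ 1 c U)
    (Z : (Fin npot → ℝ) → Matrix (Fin npot) (Fin nkin) ℝ)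
    (A : (Fin npot → ℝ) → Matrix (Fin ℓ) (Fin nkin) ℝ)
    (B : (Fin npot → ℝ) → Matrix (Fin nkin) (Fin m) ℝ)
    (tauD : (Fin npot → ℝ) → (Fin nkin → ℝ) → (Fin nkin → ℝ))
    (G : (Fin nkin → ℝ) → Matrix (Fin nkin) (Fin nkin) ℝ)
    (hG : ∀ Γ : Fin nkin → ℝ, (G Γ)ᵀ = -(G Γ))
    (I : Set ℝ) (hI : IsOpen I)
    (ζ : ℝ → (Fin npot → ℝ)) (ϖ ϖdot : ℝ → (Fin nkin → ℝ))
    (lam : ℝ → (Fin k → ℝ)) (mu : ℝ → (Fin ℓ → ℝ))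
    (tauExt ϖExt : ℝ → (Fin m → ℝ))
    (hζU : ∀ t ∈ I, ζ t ∈ U)
    (hζ : ∀ t ∈ I, HasDerivAt ζ (Z (ζ t) *ᵥ ϖ t) t)
    (hϖ : ∀ t ∈ I, HasDerivAt ϖ (ϖdot t) t)
    (hforce : ∀ t ∈ I,
      M *ᵥ ϖdot t =
        -((Z (ζ t))ᵀ *ᵥ grad V (ζ t)) - (Z (ζ t))ᵀ *ᵥ ((jac c (ζ t))ᵀ *ᵥ lam t)
          - tauD (ζ t) (ϖ t) - G (M *ᵥ ϖ t) *ᵥ ϖ t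
          - (A (ζ t))ᵀ *ᵥ mu t - B (ζ t) *ᵥ tauExt t)
    (hpos : ∀ t ∈ I, c (ζ t) = 0)
    (hvel : ∀ t ∈ I, A (ζ t) *ᵥ ϖ t = 0)
    (hext : ∀ t ∈ I, ϖExt t = (B (ζ t))ᵀ *ᵥ ϖ t) :
    ∀ t ∈ I,
      HasDerivAt (fun s => (1 / 2 : ℝ) * (ϖ s ⬝ᵥ M *ᵥ ϖ s) + V (ζ s))
        (-(ϖ t ⬝ᵥ tauD (ζ t) (ϖ t)) - ϖExt t ⬝ᵥ tauExt t) t := by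
  intro t ht
  have hUt : U ∈ 𝓝 (ζ t) := hU.mem_nhds (hζU t ht)
  have hζt := hζ t ht
  have hkin := (hϖ t ht).dotProduct_mulVec_self hM
  have hpot : HasDerivAt (fun s => V (ζ s)) (grad V (ζ t) ⬝ᵥ Z (ζ t) *ᵥ ϖ t) t := by
    have hVt := (hV.differentiableOn one_ne_zero).differentiableAt hUt
    have h := hVt.hasFDerivAt.comp_hasDerivAt t hζt
    rwa [fderiv_apply_eq_grad_dotProduct] at h
  have hconstr : jac c (ζ t) *ᵥ (Z (ζ t) *ᵥ ϖ t) = 0 := by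
    have hct := (hc.differentiableOn one_ne_zero).differentiableAt hUt
    have hc0 : (fun s => c (ζ s)) =ᶠ[𝓝 t] fun _ => 0 := eventually_of_mem (hI.mem_nhds ht) hpos
    rw [← fderiv_apply_eq_jac_mulVec]
    exact (hct.hasFDerivAt.comp_hasDerivAt t hζt).unique
      ((hasDerivAt_const t 0).congr_of_eventuallyEq hc0)
  refine ((hkin.const_mul (1 / 2 : ℝ)).add hpot).congr_deriv ?_
  rw [dotProduct_mulVec_eq_of_forceBalance (hG _) hconstr (hvel t ht) (hforce t ht), hext t ht]
  ring

/-- Energy balance for a multibody system in redundant coordinates: along any solution of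
`ζ̇ = Z(ζ)ϖ`,
`M ϖ̇ = −Z(ζ)ᵀ∇V(ζ) − Z(ζ)ᵀc'(ζ)ᵀλ − τ_d(ζ,ϖ) − G(Mϖ)ϖ − A(ζ)ᵀμ − B(ζ)τ_ext`,
`c(ζ) = 0`, `A(ζ)ϖ = 0`, `ϖ_ext = B(ζ)ᵀϖ`,
the total energy `H = ½ ϖᵀMϖ + V(ζ)` satisfies
`Ḣ = −ϖᵀ τ_d(ζ,ϖ) − ϖ_extᵀ τ_ext`. -/
theorem energy_balance_redundant {npot nkin k ℓ m : ℕ}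
    (U : Set (Fin npot → ℝ)) (hU : IsOpen U)
    (M : Matrix (Fin nkin) (Fin nkin) ℝ) (hM : Mᵀ = M)
    (V : (Fin npot → ℝ) → ℝ) (hV : ContDiffOn ℝ 1 V U)
    (c : (Fin npot → ℝ) → (Fin k → ℝ)) (hc : ContDiffOn ℝ 1 c U)
    (Z : (Fin npot → ℝ) → Matrix (Fin npot) (Fin nkin) ℝ)
    (A : (Fin npot → ℝ) → Matrix (Fin ℓ) (Fin nkin) ℝ)
    (B : (Fin npot → ℝ) → Matrix (Fin nkin) (Fin m) ℝ)
    (tauD : (Fin npot → ℝ) → (Fin nkin → ℝ) → (Fin nkin → ℝ))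
    (G : (Fin nkin → ℝ) → Matrix (Fin nkin) (Fin nkin) ℝ)
    (hG : ∀ Γ : Fin nkin → ℝ, (G Γ)ᵀ = -(G Γ))
    (I : Set ℝ) (hI : IsOpen I) (hIint : I.OrdConnected)
    (ζ : ℝ → (Fin npot → ℝ)) (ϖ ϖdot : ℝ → (Fin nkin → ℝ))
    (lam : ℝ → (Fin k → ℝ)) (mu : ℝ → (Fin ℓ → ℝ))
    (tauExt ϖExt : ℝ → (Fin m → ℝ))
    (hζU : ∀ t ∈ I, ζ t ∈ U)
    (hζ : ∀ t ∈ I, HasDerivAt ζ (Z (ζ t) *ᵥ ϖ t) t)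
    (hϖ : ∀ t ∈ I, HasDerivAt ϖ (ϖdot t) t)
    (hforce : ∀ t ∈ I,
      M *ᵥ ϖdot t =
        -((Z (ζ t))ᵀ *ᵥ grad V (ζ t)) - (Z (ζ t))ᵀ *ᵥ ((jac c (ζ t))ᵀ *ᵥ lam t)
          - tauD (ζ t) (ϖ t) - G (M *ᵥ ϖ t) *ᵥ ϖ t
          - (A (ζ t))ᵀ *ᵥ mu t - B (ζ t) *ᵥ tauExt t)
    (hpos : ∀ t ∈ I, c (ζ t) = 0)
    (hvel : ∀ t ∈ I, A (ζ t) *ᵥ ϖ t = 0)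
    (hext : ∀ t ∈ I, ϖExt t = (B (ζ t))ᵀ *ᵥ ϖ t) :
    ∀ t ∈ I,
      HasDerivAt (fun s => (1 / 2 : ℝ) * (ϖ s ⬝ᵥ M *ᵥ ϖ s) + V (ζ s))
        (-(ϖ t ⬝ᵥ tauD (ζ t) (ϖ t)) - ϖExt t ⬝ᵥ tauExt t) t :=
  energy_balance_redundant_general U hU M hM V hV c hc Z A B tauD G hG I hI ζ ϖ ϖdot lam mu tauExt
    ϖExt hζU hζ hϖ hforce hpos hvel hext
end

section
/- For i = 1,2, let U_i ⊆ ℝ^{n_pot,i} be open and let A_i : U_i → ℝ^{ℓ_i×n_kin,i}, Z_i : U_i → ℝ^{n_pot,i×n_kin,i}, B_{c,i} : U_i → ℝ^{n_kin,i×m_c}, B_{ext,i} : U_i → ℝ^{n_kin,i×m_ext,i} be continuous and G_i : ℝ^{n_kin,i} → ℝ^{n_kin,i×n_kin,i} be continuous with G_i(Γ_i) skew-symmetric for all Γ_i. Assume that the stacked matrix A(ζ₁,ζ₂) := [A₁(ζ₁), 0; 0, A₂(ζ₂); B_{c,1}(ζ₁)ᵀ, −B_{c,2}(ζ₂)ᵀ]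 has constant rank on U₁ × U₂. Set n_pot := n_pot,1 + n_pot,2, n_kin := n_kin,1 + n_kin,2, m := m_ext,1 + m_ext,2, Z(ζ₁,ζ₂) := blockdiag(Z₁(ζ₁), Z₂(ζ₂)), G(Γ₁,Γ₂) := blockdiag(G₁(Γ₁), G₂(Γ₂)), B(ζ₁,ζ₂) := blockdiag(B_{ext,1}(ζ₁), B_{ext,2}(ζ₂)), and N := n_pot + 2 n_kin + m. For (ζ,Γ) ∈ (U₁×U₂) × ℝ^{n_kin}, let D_{(ζ,Γ)} ⊆ ℝ^N × ℝ^N be the set of all pairs of flows (ϖ_Lf, τ_Lf, ϖ_R, ϖ_ext) and efforts (τ_Le, ϖ_Le, τ_R, τ_ext) with ϖ_Lf = Z(ζ) ϖ_Le, ϖ_R = ϖ_Le, A(ζ) ϖ_Le = 0, ϖ_ext = B(ζ)ᵀ ϖ_Le, and ∃ μ with τ_Lf + Z(ζ)ᵀ τ_Le + G(Γ) ϖ_Le + τ_R + B(ζ) τ_ext + A(ζ)ᵀ μ = 0. Then (D_{(ζ,Γ)})_{(ζ,Γ) ∈ (U₁×U₂) × ℝ^{n_kin}} is a modulated Dirac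 structure; i.e., the power-preserving interconnection of two port-Hamiltonian multibody systems again yields a modulated Dirac structure. -/
open Matrix

/-- A subset `D ⊆ V × V` is a Dirac structure with respect to the bilinear pairing `pair`
(between flows and efforts) if membership in `D` is equivalent to being "orthogonal" to all
of `D` with respect to `(f,e),(f̂,ê) ↦ pair f̂ e + pair f ê`. -/
def IsDiracPair {V : Type*} (pair : V → V → ℝ) (D : Set (V × V)) : Prop :=
  ∀ p : V × V, p ∈ D ↔ ∀ q ∈ D, pair q.1 p.2 + pair p.1 q.2 = 0

/-- A family `(D x)_{x ∈ U}` of subsets of `V × V` is a modulated Dirac structure if each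
`D x` is a Dirac structure and around each `x ∈ U` there is a neighborhood `Ux ⊆ U` on which
the family admits a continuous local trivialization by injective linear maps
`T y : W → V × V` (where `W ≅ ℝ^N`) with range `D y`. -/
def IsModulatedDirac (W : Type*) [AddCommGroup W] [Module ℝ W]
    {X V : Type*} [TopologicalSpace X] [TopologicalSpace V] [AddCommGroup V] [Module ℝ V]
    (pair : V → V → ℝ) (U : Set X) (D : X → Set (V × V)) : Prop :=
  (∀ x ∈ U, IsDiracPair pair (D x)) ∧
  ∀ x ∈ U, ∃ Ux : Set X, IsOpen Ux ∧ x ∈ Ux ∧ Ux ⊆ U ∧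
    ∃ T : X → (W →ₗ[ℝ] V × V),
      (∀ y ∈ Ux, Function.Injective (T y) ∧ Set.range (T y) = D y) ∧
      ∀ z : W, ContinuousOn (fun y => T y z) Ux

/-- Shape of the flow vector `(ϖ_Lf, τ_Lf, ϖ_R, ϖ_ext)` and of the effort vector
`(τ_Le, ϖ_Le, τ_R, τ_ext)` of the interconnection of two multibody systems:
`ℝ^{n_pot} × ℝ^{n_kin} × ℝ^{n_kin} × ℝ^m` with `n_pot = n_pot,1 + n_pot,2`,
`n_kin = n_kin,1 + n_kin,2`, `m = m_ext,1 + m_ext,2`. -/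
abbrev FlowIC (p₁ p₂ q₁ q₂ m₁ m₂ : ℕ) : Type :=
  ((Fin p₁ ⊕ Fin p₂) → ℝ) × ((Fin q₁ ⊕ Fin q₂) → ℝ) × ((Fin q₁ ⊕ Fin q₂) → ℝ)
    × ((Fin m₁ ⊕ Fin m₂) → ℝ)

/-- The componentwise Euclidean pairing on `ℝ^{n_pot} × ℝ^{n_kin} × ℝ^{n_kin} × ℝ^m`. -/
def pairFlowIC {p₁ p₂ q₁ q₂ m₁ m₂ : ℕ} (f e : FlowIC p₁ p₂ q₁ q₂ m₁ m₂) : ℝ :=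
  f.1 ⬝ᵥ e.1 + f.2.1 ⬝ᵥ e.2.1 + f.2.2.1 ⬝ᵥ e.2.2.1 + f.2.2.2 ⬝ᵥ e.2.2.2

/-- The stacked constraint matrix `A(ζ₁,ζ₂) = [A₁ 0; 0 A₂; B_c1ᵀ −B_c2ᵀ]` of the
interconnected system. -/
def AmatIC {q₁ q₂ l₁ l₂ mc : ℕ}
    (A₁ : Matrix (Fin l₁) (Fin q₁) ℝ) (A₂ : Matrix (Fin l₂) (Fin q₂) ℝ)
    (Bc₁ : Matrix (Fin q₁) (Fin mc) ℝ) (Bc₂ : Matrix (Fin q₂) (Fin mc) ℝ) :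
    Matrix ((Fin l₁ ⊕ Fin l₂) ⊕ Fin mc) (Fin q₁ ⊕ Fin q₂) ℝ :=
  Matrix.fromRows (Matrix.fromBlocks A₁ 0 0 A₂) (Matrix.fromCols Bc₁ᵀ (-Bc₂ᵀ))

/-! At a parameter value the set is `D = {((Z v, -(Zᵀ a + G v + c + B d + Aᵀ μ), v, Bᵀ v),
(a, v, c, d)) | A v = 0}`. Pairing such a point with an arbitrary `(f, e)` gives a linear form
in `(a, v, c, d, μ)` whose coefficients are exactly the defining equations of `D` evaluated at
`(f, e)` (the `G`-terms cancel by skew-symmetry), so `D` is its own orthogonal; the one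
non-formal step is that a vector orthogonal to `ker A` lies in `range Aᵀ`.

For the trivialization, the free effort `b` is split as `E b ∈ ker A` plus `b - E b ∈ range Aᵀ`,
where `E = 1 - Cᵀ (C Cᵀ)⁻¹ C` is the orthogonal projection onto `ker A` built from a maximal set
`C` of independent rows of `A`. Near a given parameter these rows stay independent (`det (C Cᵀ)`
is continuous), and by constant rank they still span the row space, so `E` is a continuous
family of projections onto `ker A`. -/

theorem Matrix.submatrix_id_eq_one_submatrix_mul {R K L Q : Type*} [NonAssocSemiring R]
    [Fintype L] [DecidableEq L] (A : Matrix L Q R) (e : K → L) :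
    A.submatrix e id = (1 : Matrix L L R).submatrix e id * A := by
  simpa using submatrix_mul (1 : Matrix L L R) A e id id Function.bijective_id

section KerProjection

variable {R K L Q : Type*} [CommRing R] [Fintype K] [Fintype L] [Fintype Q]

theorem Matrix.transpose_mulVec_dotProduct (A : Matrix L Q R) (μ : L → R) (v : Q → R) :
    (Aᵀ *ᵥ μ) ⬝ᵥ v = μ ⬝ᵥ (A *ᵥ v) := by
  rw [dotProduct_comm, dotProduct_transpose_mulVec]

structure IsKerProjection (A : Matrix L Q R) (E : Matrix Q Q R) : Prop where
  transpose_eq : Eᵀ = E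
  mulVec_mulVec_eq_zero : ∀ v, A *ᵥ (E *ᵥ v) = 0
  exists_transpose_mulVec_eq_sub : ∀ v, ∃ μ, Aᵀ *ᵥ μ = v - E *ᵥ v

namespace IsKerProjection

variable {A : Matrix L Q R} {E : Matrix Q Q R}

theorem mulVec_dotProduct (h : IsKerProjection A E) (u v : Q → R) :
    (E *ᵥ u) ⬝ᵥ v = u ⬝ᵥ (E *ᵥ v) := by
  rw [← transpose_mulVec_dotProduct, h.transpose_eq]

variable [LinearOrder R] [IsStrictOrderedRing R]

theorem mulVec_eq_self (h : IsKerProjection A E) {v : Q → R} (hv : A *ᵥ v = 0) :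
    E *ᵥ v = v := by
  obtain ⟨μ, hμ⟩ := h.exists_transpose_mulVec_eq_sub v
  have : (v - E *ᵥ v) ⬝ᵥ (v - E *ᵥ v) = 0 := by
    rw [← hμ, transpose_mulVec_dotProduct, hμ, mulVec_sub, hv, h.mulVec_mulVec_eq_zero,
      sub_zero, dotProduct_zero]
  rw [dotProduct_self_eq_zero, sub_eq_zero] at this
  exact this.symm

theorem mulVec_transpose_mulVec (h : IsKerProjection A E) (μ : L → R) :
    E *ᵥ (Aᵀ *ᵥ μ) = 0 := by
  rw [← dotProduct_self_eq_zero, h.mulVec_dotProduct, transpose_mulVec_dotProduct,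
    h.mulVec_mulVec_eq_zero, dotProduct_zero]

theorem exists_transpose_mulVec_eq (h : IsKerProjection A E) {w : Q → R}
    (hw : ∀ v, A *ᵥ v = 0 → w ⬝ᵥ v = 0) : ∃ μ, Aᵀ *ᵥ μ = w := by
  have hEw : E *ᵥ w = 0 := by
    have hker := h.mulVec_mulVec_eq_zero w
    rw [← dotProduct_self_eq_zero, h.mulVec_dotProduct, h.mulVec_eq_self hker, hw _ hker]
  simpa [hEw] using h.exists_transpose_mulVec_eq_sub w

end IsKerProjection

variable [DecidableEq K] [DecidableEq Q]

noncomputable def kerProjection (B : Matrix K Q R) : Matrix Q Q R :=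
  1 - Bᵀ * (B * Bᵀ)⁻¹ * B

theorem isKerProjection_kerProjection {B : Matrix K Q R} (hB : IsUnit (B * Bᵀ).det) :
    IsKerProjection B (kerProjection B) where
  transpose_eq := by
    rw [kerProjection, transpose_sub, transpose_one, transpose_mul, transpose_mul,
      transpose_transpose, transpose_nonsing_inv, transpose_mul, transpose_transpose,
      Matrix.mul_assoc]
  mulVec_mulVec_eq_zero v := by
    rw [mulVec_mulVec, kerProjection, Matrix.mul_sub, Matrix.mul_one, ← Matrix.mul_assoc,
      ← Matrix.mul_assoc, mul_nonsing_inv _ hB, Matrix.one_mul, sub_self, zero_mulVec]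
  exists_transpose_mulVec_eq_sub v := ⟨(B * Bᵀ)⁻¹ *ᵥ (B *ᵥ v), by
    rw [kerProjection, sub_mulVec, one_mulVec, sub_sub_cancel, mulVec_mulVec, mulVec_mulVec,
      Matrix.mul_assoc]⟩

theorem continuousOn_kerProjection :
    ContinuousOn (kerProjection : Matrix K Q ℝ → Matrix Q Q ℝ) {B | (B * Bᵀ).det ≠ 0} := by
  intro B hB
  have hinv : ContinuousAt (fun B : Matrix K Q ℝ => (B * Bᵀ)⁻¹) B :=
    ContinuousAt.comp (g := Inv.inv) (f := fun B => B * Bᵀ)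
      (continuousAt_matrix_inv _ (NormedRing.inverse_continuousAt (Ne.isUnit hB).unit))
      (by fun_prop)
  unfold kerProjection
  exact ContinuousAt.continuousWithinAt (by fun_prop)

end KerProjection

section Rank

variable {𝕜 K L Q : Type*} [Field 𝕜] [Fintype L] [Fintype Q]

theorem Matrix.ker_mulVecLin_submatrix_eq (A : Matrix L Q 𝕜) (e : K → L)
    (hrank : (A.submatrix e id).rank = A.rank) :
    LinearMap.ker (A.submatrix e id).mulVecLin = LinearMap.ker A.mulVecLin := by
  classical
  refine (Submodule.eq_of_le_of_finrank_eq ?_ ?_).symm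
  · intro v hv
    simp only [LinearMap.mem_ker, mulVecLin_apply] at hv ⊢
    rw [submatrix_id_eq_one_submatrix_mul, ← mulVec_mulVec, hv, mulVec_zero]
  · have h₁ := LinearMap.finrank_range_add_finrank_ker A.mulVecLin
    have h₂ := LinearMap.finrank_range_add_finrank_ker (A.submatrix e id).mulVecLin
    rw [rank, rank] at hrank
    omega

theorem IsKerProjection.of_submatrix [Fintype K] [DecidableEq L] {A : Matrix L Q 𝕜}
    {E : Matrix Q Q 𝕜} (e : K → L) (h : IsKerProjection (A.submatrix e id) E)
    (hrank : (A.submatrix e id).rank = A.rank) :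
    IsKerProjection A E where
  transpose_eq := h.transpose_eq
  mulVec_mulVec_eq_zero v := by
    simpa [A.ker_mulVecLin_submatrix_eq e hrank] using
      (LinearMap.mem_ker (f := (A.submatrix e id).mulVecLin)).mpr (h.mulVec_mulVec_eq_zero v)
  exists_transpose_mulVec_eq_sub v := by
    obtain ⟨μ, hμ⟩ := h.exists_transpose_mulVec_eq_sub v
    refine ⟨((1 : Matrix L L 𝕜).submatrix e id)ᵀ *ᵥ μ, ?_⟩
    rw [mulVec_mulVec, ← transpose_mul, ← submatrix_id_eq_one_submatrix_mul, hμ]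

theorem Matrix.isUnit_det_of_rank_eq_card [DecidableEq Q] {M : Matrix Q Q 𝕜}
    (h : M.rank = Fintype.card Q) : IsUnit M.det := by
  rw [← isUnit_iff_isUnit_det, ← mulVec_surjective_iff_isUnit, ← coe_mulVecLin,
    ← LinearMap.range_eq_top]
  apply Submodule.eq_top_of_finrank_eq
  rwa [Module.finrank_fintype_fun_eq_card]

variable [LinearOrder 𝕜] [IsStrictOrderedRing 𝕜]

theorem Matrix.exists_isUnit_det_submatrix_mul_transpose (A : Matrix L Q 𝕜) :
    ∃ e : Fin A.rank → L, IsUnit (A.submatrix e id * (A.submatrix e id)ᵀ).det := by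
  obtain ⟨κ, a, ha, hspan, hli⟩ := exists_linearIndependent' 𝕜 A.row
  have : Finite κ := .of_injective a ha
  have := Fintype.ofFinite κ
  have hcard : Fintype.card κ = A.rank := by
    rw [rank_eq_finrank_span_row, ← hspan, finrank_span_eq_card hli]
  let ε : Fin A.rank ≃ κ := (Fintype.equivFinOfCardEq hcard).symm
  refine ⟨a ∘ ε, isUnit_det_of_rank_eq_card ?_⟩
  rw [rank_self_mul_transpose, Fintype.card_fin]
  exact (hli.comp ε ε.injective).rank_matrix.trans (Fintype.card_fin _)

theorem exists_isKerProjection (A : Matrix L Q 𝕜) :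
    ∃ E, IsKerProjection A E := by
  classical
  obtain ⟨e, he⟩ := A.exists_isUnit_det_submatrix_mul_transpose
  refine ⟨kerProjection (A.submatrix e id), (isKerProjection_kerProjection he).of_submatrix e ?_⟩
  rw [← rank_self_mul_transpose, rank_of_isUnit _ ((isUnit_iff_isUnit_det _).mpr he),
    Fintype.card_fin]

end Rank

theorem exists_continuousOn_isKerProjection {X L Q : Type*} [TopologicalSpace X] [Fintype L]
    [Fintype Q] {S : Set X} {𝒜 : X → Matrix L Q ℝ} (hS : IsOpen S)
    (h𝒜 : ContinuousOn 𝒜 S) {x : X} (hx : x ∈ S) (hrank : ∀ y ∈ S, (𝒜 y).rank = (𝒜 x).rank) :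
    ∃ U, IsOpen U ∧ x ∈ U ∧ U ⊆ S ∧
      ∃ E : X → Matrix Q Q ℝ, ContinuousOn E U ∧ ∀ y ∈ U, IsKerProjection (𝒜 y) (E y) := by
  classical
  obtain ⟨e, he⟩ := (𝒜 x).exists_isUnit_det_submatrix_mul_transpose
  let C y := (𝒜 y).submatrix e id
  have hC : ContinuousOn C S := (continuous_id.matrix_submatrix e id).comp_continuousOn h𝒜
  have hdet : ContinuousOn (fun y => (C y * (C y)ᵀ).det) S :=
    (by fun_prop : Continuous fun B : Matrix _ Q ℝ => (B * Bᵀ).det).comp_continuousOn hC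
  refine ⟨S ∩ (fun y => (C y * (C y)ᵀ).det) ⁻¹' {0}ᶜ,
    hdet.isOpen_inter_preimage hS isOpen_compl_singleton, ⟨hx, he.ne_zero⟩,
    Set.inter_subset_left, fun y => kerProjection (C y),
    continuousOn_kerProjection.comp (hC.mono Set.inter_subset_left) fun y hy => hy.2,
    fun y hy => (isKerProjection_kerProjection (Ne.isUnit hy.2)).of_submatrix e ?_⟩
  rw [← rank_self_mul_transpose, rank_of_det_ne_zero hy.2, Fintype.card_fin, hrank y hy.1]

section Multibody

variable {L P Q M : Type*} [Fintype L] [Fintype P] [Fintype Q] [Fintype M]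

variable (P Q M) in
abbrev PortSpace : Type _ := (P → ℝ) × (Q → ℝ) × (Q → ℝ) × (M → ℝ)

def portPairing (f e : PortSpace P Q M) : ℝ :=
  f.1 ⬝ᵥ e.1 + f.2.1 ⬝ᵥ e.2.1 + f.2.2.1 ⬝ᵥ e.2.2.1 + f.2.2.2 ⬝ᵥ e.2.2.2

variable (Z : Matrix P Q ℝ) (G : Matrix Q Q ℝ) (B : Matrix Q M ℝ) (A : Matrix L Q ℝ)

def multibodyDirac : Set (PortSpace P Q M × PortSpace P Q M) :=
  {x | x.1.1 = Z *ᵥ x.2.2.1 ∧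
       x.1.2.2.1 = x.2.2.1 ∧
       A *ᵥ x.2.2.1 = 0 ∧
       x.1.2.2.2 = Bᵀ *ᵥ x.2.2.1 ∧
       ∃ μ : L → ℝ,
         x.1.2.1 + Zᵀ *ᵥ x.2.1 + G *ᵥ x.2.2.1 + x.2.2.2.1 + B *ᵥ x.2.2.2.2 + Aᵀ *ᵥ μ = 0}

def multibodyDiracPoint (a : P → ℝ) (v c : Q → ℝ) (d : M → ℝ) (μ : L → ℝ) :
    PortSpace P Q M × PortSpace P Q M :=
  ((Z *ᵥ v, -(Zᵀ *ᵥ a + G *ᵥ v + c + B *ᵥ d + Aᵀ *ᵥ μ), v, Bᵀ *ᵥ v), (a, v, c, d))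

variable {Z G B A}

theorem mem_multibodyDirac_iff {x : PortSpace P Q M × PortSpace P Q M} :
    x ∈ multibodyDirac Z G B A ↔
      ∃ a v c d μ, A *ᵥ v = 0 ∧ multibodyDiracPoint Z G B A a v c d μ = x := by
  constructor
  · obtain ⟨⟨f₁, f₂, f₃, f₄⟩, a, v, c, d⟩ := x
    rintro ⟨h₁, h₃, hv, h₄, μ, hμ⟩
    refine ⟨a, v, c, d, μ, hv, ?_⟩
    simp only at h₁ h₃ h₄ hμ
    simp only [multibodyDiracPoint, h₁, h₃, h₄, Prod.mk.injEq, and_true, true_and]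
    linear_combination -hμ
  · rintro ⟨a, v, c, d, μ, hv, rfl⟩
    exact ⟨rfl, rfl, hv, rfl, μ, by simp only [multibodyDiracPoint]; abel⟩

theorem portPairing_multibodyDiracPoint (hG : Gᵀ = -G) (a : P → ℝ) (v c : Q → ℝ) (d : M → ℝ)
    (μ : L → ℝ) (p : PortSpace P Q M × PortSpace P Q M) :
    portPairing (multibodyDiracPoint Z G B A a v c d μ).1 p.2
        + portPairing p.1 (multibodyDiracPoint Z G B A a v c d μ).2
      = (p.1.1 - Z *ᵥ p.2.2.1) ⬝ᵥ a
        + (p.1.2.1 + Zᵀ *ᵥ p.2.1 + G *ᵥ p.2.2.1 + p.2.2.2.1 + B *ᵥ p.2.2.2.2) ⬝ᵥ v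
        + (p.1.2.2.1 - p.2.2.1) ⬝ᵥ c + (p.1.2.2.2 - Bᵀ *ᵥ p.2.2.1) ⬝ᵥ d
        - μ ⬝ᵥ (A *ᵥ p.2.2.1) := by
  obtain ⟨⟨f₁, f₂, f₃, f₄⟩, e₁, e₂, e₃, e₄⟩ := p
  have hG' := transpose_mulVec_dotProduct Gᵀ v e₂
  have hB' := transpose_mulVec_dotProduct Bᵀ d e₂
  rw [transpose_transpose, hG, neg_mulVec, dotProduct_neg] at hG'
  rw [transpose_transpose] at hB'
  simp only [portPairing, multibodyDiracPoint, neg_dotProduct, add_dotProduct, sub_dotProduct]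
  linarith [transpose_mulVec_dotProduct Z a e₂, transpose_mulVec_dotProduct Z e₁ v,
    transpose_mulVec_dotProduct B v e₄, transpose_mulVec_dotProduct A μ e₂,
    dotProduct_comm a (Z *ᵥ e₂), dotProduct_comm e₁ (Z *ᵥ v), dotProduct_comm v (G *ᵥ e₂),
    dotProduct_comm c e₂, dotProduct_comm d (Bᵀ *ᵥ e₂), dotProduct_comm v e₃,
    dotProduct_comm v (B *ᵥ e₄), dotProduct_comm f₁ a, dotProduct_comm f₂ v,
    dotProduct_comm f₃ c, dotProduct_comm f₄ d]

theorem isDiracPair_multibodyDirac (hG : Gᵀ = -G) :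
    IsDiracPair portPairing (multibodyDirac Z G B A) := by
  intro p
  constructor
  · rintro ⟨h₁, h₃, hA, h₄, ν, hν⟩ q hq
    obtain ⟨a, v, c, d, μ, hv, rfl⟩ := mem_multibodyDirac_iff.mp hq
    rw [portPairing_multibodyDiracPoint hG, h₁, h₃, h₄, eq_neg_of_add_eq_zero_left hν,
      neg_dotProduct, transpose_mulVec_dotProduct, hv, hA]
    simp
  · intro h
    have hpair (a v c d μ) (hv : A *ᵥ v = 0) :=
      (portPairing_multibodyDiracPoint hG a v c d μ p).symm.trans
        (h _ (mem_multibodyDirac_iff.mpr ⟨a, v, c, d, μ, hv, rfl⟩))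
    have h₁ : p.1.1 = Z *ᵥ p.2.2.1 := sub_eq_zero.mp <| dotProduct_eq_zero_iff.mp fun a => by
      simpa using hpair a 0 0 0 0 (mulVec_zero A)
    have h₃ : p.1.2.2.1 = p.2.2.1 := sub_eq_zero.mp <| dotProduct_eq_zero_iff.mp fun c => by
      simpa using hpair 0 0 c 0 0 (mulVec_zero A)
    have h₄ : p.1.2.2.2 = Bᵀ *ᵥ p.2.2.1 := sub_eq_zero.mp <| dotProduct_eq_zero_iff.mp fun d => by
      simpa using hpair 0 0 0 d 0 (mulVec_zero A)
    have hA : A *ᵥ p.2.2.1 = 0 := dotProduct_eq_zero_iff.mp fun μ => by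
      simpa [dotProduct_comm μ] using hpair 0 0 0 0 μ (mulVec_zero A)
    obtain ⟨E, hE⟩ := exists_isKerProjection A
    obtain ⟨μ, hμ⟩ := hE.exists_transpose_mulVec_eq
      (w := p.1.2.1 + Zᵀ *ᵥ p.2.1 + G *ᵥ p.2.2.1 + p.2.2.2.1 + B *ᵥ p.2.2.2.2)
      fun v hv => by simpa using hpair 0 v 0 0 0 hv
    exact ⟨h₁, h₃, hA, h₄, -μ, by rw [mulVec_neg, hμ, add_neg_cancel]⟩

def multibodyChart (Z : Matrix P Q ℝ) (G : Matrix Q Q ℝ) (B : Matrix Q M ℝ) (E : Matrix Q Q ℝ) :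
    PortSpace P Q M →ₗ[ℝ] PortSpace P Q M × PortSpace P Q M where
  toFun z :=
    ((Z *ᵥ (E *ᵥ z.2.1),
      (z.2.1 - E *ᵥ z.2.1) - (Zᵀ *ᵥ z.1 + G *ᵥ (E *ᵥ z.2.1) + z.2.2.1 + B *ᵥ z.2.2.2),
      E *ᵥ z.2.1, Bᵀ *ᵥ (E *ᵥ z.2.1)),
     (z.1, E *ᵥ z.2.1, z.2.2.1, z.2.2.2))
  map_add' x y := by
    simp only [Prod.fst_add, Prod.snd_add, mulVec_add, Prod.mk_add_mk, Prod.mk.injEq, and_true,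
      true_and]
    abel
  map_smul' r x := by
    simp only [Prod.smul_fst, Prod.smul_snd, mulVec_smul, Prod.smul_mk, RingHom.id_apply,
      smul_sub, smul_add]

variable {E : Matrix Q Q ℝ}

theorem multibodyChart_injective : Function.Injective (multibodyChart Z G B E) := by
  rw [← LinearMap.ker_eq_bot, LinearMap.ker_eq_bot']
  rintro ⟨a, b, c, d⟩ hz
  simp only [multibodyChart, LinearMap.coe_mk, AddHom.coe_mk, Prod.mk_eq_zero] at hz
  obtain ⟨⟨-, hb, -⟩, rfl, hEb, rfl, rfl⟩ := hz
  simpa [hEb] using hb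

theorem multibodyChart_apply (a : P → ℝ) (b c : Q → ℝ) (d : M → ℝ)
    {μ : L → ℝ} (hμ : Aᵀ *ᵥ μ = E *ᵥ b - b) :
    multibodyChart Z G B E (a, b, c, d) = multibodyDiracPoint Z G B A a (E *ᵥ b) c d μ := by
  simp only [multibodyChart, multibodyDiracPoint, LinearMap.coe_mk, AddHom.coe_mk, hμ,
    Prod.mk.injEq, and_true, true_and]
  abel

theorem range_multibodyChart (hE : IsKerProjection A E) :
    Set.range (multibodyChart Z G B E) = multibodyDirac Z G B A := by
  ext x
  rw [mem_multibodyDirac_iff]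
  constructor
  · rintro ⟨⟨a, b, c, d⟩, rfl⟩
    obtain ⟨μ, hμ⟩ := hE.exists_transpose_mulVec_eq_sub b
    refine ⟨a, E *ᵥ b, c, d, -μ, hE.mulVec_mulVec_eq_zero b, ?_⟩
    exact (multibodyChart_apply a b c d (by rw [mulVec_neg, hμ, neg_sub])).symm
  · rintro ⟨a, v, c, d, μ, hv, rfl⟩
    have hEb : E *ᵥ (v - Aᵀ *ᵥ μ) = v := by
      rw [mulVec_sub, hE.mulVec_eq_self hv, hE.mulVec_transpose_mulVec, sub_zero]
    refine ⟨(a, v - Aᵀ *ᵥ μ, c, d), ?_⟩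
    rw [multibodyChart_apply a _ c d (μ := μ) (by rw [hEb, sub_sub_cancel]), hEb]

theorem continuous_multibodyChart_apply (z : PortSpace P Q M) :
    Continuous fun x : Matrix P Q ℝ × Matrix Q Q ℝ × Matrix Q M ℝ × Matrix Q Q ℝ =>
      multibodyChart x.1 x.2.1 x.2.2.1 x.2.2.2 z := by
  simp only [multibodyChart, LinearMap.coe_mk, AddHom.coe_mk]
  fun_prop

end Multibody

theorem isModulatedDirac_multibodyDirac {X L P Q M : Type*} [TopologicalSpace X] [Fintype L]
    [Fintype P] [Fintype Q] [Fintype M] {S : Set X} (hS : IsOpen S)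
    {𝒵 : X → Matrix P Q ℝ} {𝒢 : X → Matrix Q Q ℝ} {ℬ : X → Matrix Q M ℝ} {𝒜 : X → Matrix L Q ℝ}
    (h𝒵 : ContinuousOn 𝒵 S) (h𝒢 : ContinuousOn 𝒢 S) (hℬ : ContinuousOn ℬ S)
    (h𝒜 : ContinuousOn 𝒜 S) (hskew : ∀ y ∈ S, (𝒢 y)ᵀ = -𝒢 y)
    (hrank : ∃ ρ, ∀ y ∈ S, (𝒜 y).rank = ρ) :
    IsModulatedDirac (PortSpace P Q M) portPairing S
      fun y => multibodyDirac (𝒵 y) (𝒢 y) (ℬ y) (𝒜 y) := by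
  obtain ⟨ρ, hρ⟩ := hrank
  refine ⟨fun y hy => isDiracPair_multibodyDirac (hskew y hy), fun x hx => ?_⟩
  obtain ⟨U, hU, hxU, hUS, E, hE, hEker⟩ := exists_continuousOn_isKerProjection hS h𝒜 hx
    fun y hy => (hρ y hy).trans (hρ x hx).symm
  refine ⟨U, hU, hxU, hUS, fun y => multibodyChart (𝒵 y) (𝒢 y) (ℬ y) (E y),
    fun y hy => ⟨multibodyChart_injective, range_multibodyChart (hEker y hy)⟩, fun z => ?_⟩
  exact (continuous_multibodyChart_apply z).comp_continuousOn
    ((h𝒵.mono hUS).prodMk ((h𝒢.mono hUS).prodMk ((hℬ.mono hUS).prodMk hE)))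

theorem ContinuousOn.matrix_fromBlocks_zero {X Y I₁ I₂ J₁ J₂ : Type*} [TopologicalSpace X]
    [TopologicalSpace Y] {f : X → Matrix I₁ J₁ ℝ} {g : Y → Matrix I₂ J₂ ℝ} {s : Set X}
    {t : Set Y} (hf : ContinuousOn f s) (hg : ContinuousOn g t) :
    ContinuousOn (fun x : X × Y => fromBlocks (f x.1) 0 0 (g x.2)) (s ×ˢ t) :=
  (by fun_prop : Continuous fun m : Matrix I₁ J₁ ℝ × Matrix I₂ J₂ ℝ =>
    fromBlocks m.1 0 0 m.2).comp_continuousOn (hf.prodMap hg)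

theorem continuous_AmatIC {q₁ q₂ l₁ l₂ mc : ℕ} :
    Continuous fun x : (Matrix (Fin l₁) (Fin q₁) ℝ × Matrix (Fin q₁) (Fin mc) ℝ) ×
        (Matrix (Fin l₂) (Fin q₂) ℝ × Matrix (Fin q₂) (Fin mc) ℝ) =>
      AmatIC x.1.1 x.2.1 x.1.2 x.2.2 := by
  refine continuous_matrix ?_
  rintro ((i | i) | i) (j | j) <;> simp [AmatIC] <;> fun_prop

/-- The power-preserving interconnection of two port-Hamiltonian multibody systems again
yields a modulated Dirac structure: under the constant-rank assumption on the stacked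
constraint matrix, the family of Dirac structures of the interconnected system with
block-diagonal `Z`, `G`, `B` and stacked constraint matrix `A`, modulated by
`(ζ,Γ) ∈ (U₁ × U₂) × ℝ^{n_kin}`, is a modulated Dirac structure. -/
theorem interconnection_isModulatedDirac
    {p₁ p₂ q₁ q₂ l₁ l₂ mc m₁ m₂ : ℕ}
    (U₁ : Set (Fin p₁ → ℝ)) (U₂ : Set (Fin p₂ → ℝ))
    (hU₁ : IsOpen U₁) (hU₂ : IsOpen U₂)
    (A₁ : (Fin p₁ → ℝ) → Matrix (Fin l₁) (Fin q₁) ℝ)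
    (A₂ : (Fin p₂ → ℝ) → Matrix (Fin l₂) (Fin q₂) ℝ)
    (Z₁ : (Fin p₁ → ℝ) → Matrix (Fin p₁) (Fin q₁) ℝ)
    (Z₂ : (Fin p₂ → ℝ) → Matrix (Fin p₂) (Fin q₂) ℝ)
    (Bc₁ : (Fin p₁ → ℝ) → Matrix (Fin q₁) (Fin mc) ℝ)
    (Bc₂ : (Fin p₂ → ℝ) → Matrix (Fin q₂) (Fin mc) ℝ)
    (Bext₁ : (Fin p₁ → ℝ) → Matrix (Fin q₁) (Fin m₁) ℝ)
    (Bext₂ : (Fin p₂ → ℝ) → Matrix (Fin q₂) (Fin m₂) ℝ)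
    (G₁ : (Fin q₁ → ℝ) → Matrix (Fin q₁) (Fin q₁) ℝ)
    (G₂ : (Fin q₂ → ℝ) → Matrix (Fin q₂) (Fin q₂) ℝ)
    (hA₁ : ContinuousOn A₁ U₁) (hA₂ : ContinuousOn A₂ U₂)
    (hZ₁ : ContinuousOn Z₁ U₁) (hZ₂ : ContinuousOn Z₂ U₂)
    (hBc₁ : ContinuousOn Bc₁ U₁) (hBc₂ : ContinuousOn Bc₂ U₂)
    (hBext₁ : ContinuousOn Bext₁ U₁) (hBext₂ : ContinuousOn Bext₂ U₂)
    (hG₁ : Continuous G₁) (hG₂ : Continuous G₂)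
    (hskew₁ : ∀ Γ₁ : Fin q₁ → ℝ, (G₁ Γ₁)ᵀ = -(G₁ Γ₁))
    (hskew₂ : ∀ Γ₂ : Fin q₂ → ℝ, (G₂ Γ₂)ᵀ = -(G₂ Γ₂))
    (hrank : ∃ ρ : ℕ, ∀ ζ₁ ∈ U₁, ∀ ζ₂ ∈ U₂,
      (AmatIC (A₁ ζ₁) (A₂ ζ₂) (Bc₁ ζ₁) (Bc₂ ζ₂)).rank = ρ) :
    IsModulatedDirac (FlowIC p₁ p₂ q₁ q₂ m₁ m₂) pairFlowIC
      ((U₁ ×ˢ U₂) ×ˢ (Set.univ : Set ((Fin q₁ → ℝ) × (Fin q₂ → ℝ))))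
      (fun ζΓ =>
        {x : FlowIC p₁ p₂ q₁ q₂ m₁ m₂ × FlowIC p₁ p₂ q₁ q₂ m₁ m₂ |
          x.1.1 = Matrix.fromBlocks (Z₁ ζΓ.1.1) 0 0 (Z₂ ζΓ.1.2) *ᵥ x.2.2.1 ∧
          x.1.2.2.1 = x.2.2.1 ∧
          AmatIC (A₁ ζΓ.1.1) (A₂ ζΓ.1.2) (Bc₁ ζΓ.1.1) (Bc₂ ζΓ.1.2) *ᵥ x.2.2.1 = 0 ∧
          x.1.2.2.2 = (Matrix.fromBlocks (Bext₁ ζΓ.1.1) 0 0 (Bext₂ ζΓ.1.2))ᵀ *ᵥ x.2.2.1 ∧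
          ∃ μ : ((Fin l₁ ⊕ Fin l₂) ⊕ Fin mc) → ℝ,
            x.1.2.1 + (Matrix.fromBlocks (Z₁ ζΓ.1.1) 0 0 (Z₂ ζΓ.1.2))ᵀ *ᵥ x.2.1
              + Matrix.fromBlocks (G₁ ζΓ.2.1) 0 0 (G₂ ζΓ.2.2) *ᵥ x.2.2.1
              + x.2.2.2.1
              + Matrix.fromBlocks (Bext₁ ζΓ.1.1) 0 0 (Bext₂ ζΓ.1.2) *ᵥ x.2.2.2.2
              + (AmatIC (A₁ ζΓ.1.1) (A₂ ζΓ.1.2) (Bc₁ ζΓ.1.1) (Bc₂ ζΓ.1.2))ᵀ *ᵥ μ = 0}) := by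
  refine isModulatedDirac_multibodyDirac ((hU₁.prod hU₂).prod isOpen_univ)
    ((hZ₁.matrix_fromBlocks_zero hZ₂).comp continuousOn_fst fun y hy => hy.1)
    ((continuousOn_univ.mpr hG₁).matrix_fromBlocks_zero (continuousOn_univ.mpr hG₂) |>.comp
      continuousOn_snd fun y hy => by simp)
    ((hBext₁.matrix_fromBlocks_zero hBext₂).comp continuousOn_fst fun y hy => hy.1)
    ((continuous_AmatIC.comp_continuousOn ((hA₁.prodMk hBc₁).prodMap (hA₂.prodMk hBc₂))).comp
      continuousOn_fst fun y hy => hy.1)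
    (fun y _ => by simp only [fromBlocks_transpose, hskew₁, hskew₂, transpose_zero,
      fromBlocks_neg, neg_zero])
    (hrank.imp fun ρ hρ y hy => hρ _ hy.1.1 _ hy.1.2)
end
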